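/- For m > 1 and n = 2^m - 1, Γ(1/(2n)) · ∏_{k=1}^{m-1} Γ((2^k + n)/(2n)) = 2^{m-1} · π^{m/2}. -/

import Mathlib

/-!
Iterating Legendre's duplication formula `Γ(y) Γ(y + 1/2) = 2^(1 - 2y) √π Γ(2y)` along
`y = x, 2x, …, 2^(m-1) x` telescopes the `Γ(2^k x)` factors, leaving
`Γ(x) ∏_{k<m} Γ(2^k x + 1/2) = Γ(2^m x) 2^(m - 2(2^m - 1)x) √π^m`.
For `x = 1/(2n)` with `n = 2^m - 1` we have `2^m x = x + 1/2`, so the factor `Γ(2^m x)` cancels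
the `k = 0` term of the product, and the power of `2` becomes `2^(m-1)`.
-/

open Finset Real

theorem Real.Gamma_mul_prod_Gamma_two_pow_mul_add_half (x : ℝ) (m : ℕ) :
    Gamma x * ∏ k ∈ range m, Gamma (2 ^ k * x + 1 / 2) =
      Gamma (2 ^ m * x) * (2 : ℝ) ^ ((m : ℝ) - 2 * (2 ^ m - 1) * x) * √π ^ m := by
  induction m with
  | zero => simp
  | succ m ih =>
    rw [prod_range_succ, ← mul_assoc, ih, mul_right_comm _ _ (Gamma _),
      mul_right_comm _ _ (Gamma _), Gamma_mul_Gamma_add_half, ← mul_assoc 2, ← pow_succ']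
    calc _ = Gamma (2 ^ (m + 1) * x) * ((2 : ℝ) ^ (1 - 2 ^ (m + 1) * x) *
          (2 : ℝ) ^ ((m : ℝ) - 2 * (2 ^ m - 1) * x)) * (√π ^ m * √π) := by ring
      _ = _ := by
        rw [← rpow_add two_pos, pow_succ _ m]
        congr 3
        push_cast
        ring

theorem zucker_product (m : ℕ) (hm : 1 < m) (n : ℕ) (hn : n = 2 ^ m - 1) :
    Real.Gamma (1 / (2 * n)) *
        ∏ k ∈ Finset.Icc 1 (m - 1), Real.Gamma (((2 ^ k : ℕ) + n) / (2 * n)) =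
      2 ^ (m - 1) * Real.pi ^ ((m : ℝ) / 2) := by
  set x : ℝ := 1 / (2 * n) with hx
  have hn_real : (n : ℝ) = 2 ^ m - 1 := by
    rw [hn, Nat.cast_sub Nat.one_le_two_pow]; push_cast; ring
  have hn_pos : (0 : ℝ) < n := by
    rw [hn_real]; have : (2 : ℝ) ^ 1 < 2 ^ m := pow_lt_pow_right₀ one_lt_two hm; linarith
  have h_top : 2 ^ m * x = x + 1 / 2 := by
    rw [hx]; field_simp; rw [hn_real]; ring
  have h_exp : (m : ℝ) - 2 * (2 ^ m - 1) * x = ((m - 1 : ℕ) : ℝ) := by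
    rw [hx, ← hn_real, Nat.cast_sub hm.le]; field_simp; ring
  have h_arg (k : ℕ) : (((2 ^ k : ℕ) + n) / (2 * n) : ℝ) = 2 ^ k * x + 1 / 2 := by
    rw [hx]; field_simp; push_cast; ring
  have h_sqrt_pi : √π ^ m = π ^ ((m : ℝ) / 2) := by
    rw [sqrt_eq_rpow, ← rpow_natCast, ← rpow_mul pi_pos.le]; ring_nf
  have key := Gamma_mul_prod_Gamma_two_pow_mul_add_half x m
  rw [prod_range_eq_mul_Ico _ (by omega), h_top, h_exp, rpow_natCast, pow_zero, one_mul] at key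
  rw [Icc_sub_one_right_eq_Ico_of_not_isMin (by simp [isMin_iff_eq_bot]; omega), ← h_sqrt_pi]
  simp_rw [h_arg]
  have h_half_pos : 0 < Gamma (x + 1 / 2) := Gamma_pos_of_pos (by positivity)
  apply mul_left_cancel₀ h_half_pos.ne'
  linear_combination key
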